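/- Let F: T → T' be a triangle functor between triangulated categories with a right adjoint G. Assume that N ⊆ T and N' ⊆ T' are triangulated subcategories satisfying F(N) ⊆ N' and G(N') ⊆ N. Then the induced triangle functor F̄: T/N → T'/N' (the unique functor with F̄ ∘ q = q' ∘ F, where q, q' are the quotient functors) has a right adjoint Ḡ, namely the functor induced by G. Moreover, if G is fully faithful, then Ḡ is fully faithful. -/

import Mathlib

/-!
A triangulated functor that maps `N` into `N'` sends a morphism whose cone lies in `N` to one
whose cone lies in `N'`, so it descends to the Verdier quotients. This applies to `F` and, since
the right adjoint of a triangulated functor is triangulated, also to `G`; the adjunction then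
descends as well. If `G` is fully faithful, the counit of `F ⊣ G` is invertible, and the induced
counit is its image under `q'` on objects `q' Y`, which exhaust `T'/N'`; so `Ḡ` is fully faithful.
-/

open CategoryTheory Limits Pretriangulated

namespace CategoryTheory

lemma NatTrans.isIso_of_isIso_app_obj {C D E : Type*} [Category C] [Category D] [Category E]
    (L : C ⥤ D) [L.EssSurj] {F G : D ⥤ E} (α : F ⟶ G)
    (hα : ∀ X : C, IsIso (α.app (L.obj X))) : IsIso α := by
  have (Y : D) : IsIso (α.app Y) := by
    rw [← NatTrans.isIso_app_iff_of_iso α (L.objObjPreimageIso Y)]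
    exact hα _
  exact NatIso.isIso_of_isIso_app α

lemma Adjunction.isIso_localization_counit {C₁ C₂ D₁ D₂ : Type*} [Category C₁] [Category C₂]
    [Category D₁] [Category D₂] {G : C₁ ⥤ C₂} {F : C₂ ⥤ C₁} (adj : G ⊣ F) [IsIso adj.counit]
    (L₁ : C₁ ⥤ D₁) (W₁ : MorphismProperty C₁) [L₁.IsLocalization W₁]
    (L₂ : C₂ ⥤ D₂) (W₂ : MorphismProperty C₂) [L₂.IsLocalization W₂]
    (G' : D₁ ⥤ D₂) (F' : D₂ ⥤ D₁) [CatCommSq G L₁ L₂ G'] [CatCommSq F L₂ L₁ F'] :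
    IsIso (adj.localization L₁ W₁ L₂ W₂ G' F').counit := by
  have := Localization.essSurj L₂ W₂
  refine NatTrans.isIso_of_isIso_app_obj L₂ _ fun X => ?_
  rw [Adjunction.localization_counit_app]
  infer_instance

namespace ObjectProperty

variable {C D : Type*} [Category C] [Category D] [HasZeroObject C] [HasZeroObject D]
  [Preadditive C] [Preadditive D] [HasShift C ℤ] [HasShift D ℤ]
  [∀ n : ℤ, (shiftFunctor C n).Additive] [∀ n : ℤ, (shiftFunctor D n).Additive]
  [Pretriangulated C] [Pretriangulated D]

lemma trW_map {P : ObjectProperty C} {Q : ObjectProperty D} (F : C ⥤ D) [F.CommShift ℤ]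
    [F.IsTriangulated] (hPQ : P ≤ Q.inverseImage F) {X Y : C} {f : X ⟶ Y} (hf : P.trW f) :
    Q.trW (F.map f) := by
  obtain ⟨Z, _, _, hT, hZ⟩ := hf
  exact trW.mk _ (F.map_distinguished _ hT) (hPQ Z hZ)

lemma trW_isInvertedBy_comp {P : ObjectProperty C} {Q : ObjectProperty D} (F : C ⥤ D)
    [F.CommShift ℤ] [F.IsTriangulated] (hPQ : P ≤ Q.inverseImage F) :
    P.trW.IsInvertedBy (F ⋙ Q.trW.Q) := fun _ _ _ hf =>
  Localization.inverts Q.trW.Q Q.trW _ (trW_map F hPQ hf)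

end ObjectProperty

end CategoryTheory

namespace Paper

variable {T : Type*} [Category T] [HasZeroObject T] [HasShift T ℤ] [Preadditive T]
  [∀ n : ℤ, (shiftFunctor T n).Additive] [Pretriangulated T] [IsTriangulated T]
variable {T' : Type*} [Category T'] [HasZeroObject T'] [HasShift T' ℤ] [Preadditive T']
  [∀ n : ℤ, (shiftFunctor T' n).Additive] [Pretriangulated T'] [IsTriangulated T']

theorem induced_functor_on_quotients_has_right_adjoint_general
    (F : T ⥤ T') [F.CommShift ℤ] [F.IsTriangulated] (G : T' ⥤ T) (adj : F ⊣ G)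
    (N : ObjectProperty T) (N' : ObjectProperty T')
    (hFN : ∀ X : T, N X → N' (F.obj X)) (hGN' : ∀ Y : T', N' Y → N (G.obj Y)) :
    ∃ (Fbar : N.trW.Localization ⥤ N'.trW.Localization)
      (Gbar : N'.trW.Localization ⥤ N.trW.Localization),
      (N.trW.Q ⋙ Fbar = F ⋙ N'.trW.Q) ∧ (N'.trW.Q ⋙ Gbar = G ⋙ N.trW.Q) ∧
      Nonempty (Fbar ⊣ Gbar) ∧ (G.Full → G.Faithful → Gbar.Full ∧ Gbar.Faithful) := by
  let := adj.rightAdjointCommShift ℤ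
  let := adj.commShift_of_leftAdjoint ℤ
  have := adj.isTriangulated_rightAdjoint
  let Fbar := Localization.Construction.lift _ (N.trW_isInvertedBy_comp F hFN)
  let Gbar := Localization.Construction.lift _ (N'.trW_isInvertedBy_comp G hGN')
  have hF : N.trW.Q ⋙ Fbar = F ⋙ N'.trW.Q := Localization.Construction.fac _ _
  have hG : N'.trW.Q ⋙ Gbar = G ⋙ N.trW.Q := Localization.Construction.fac _ _
  let : CatCommSq F N.trW.Q N'.trW.Q Fbar := ⟨eqToIso hF.symm⟩
  let : CatCommSq G N'.trW.Q N.trW.Q Gbar := ⟨eqToIso hG.symm⟩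
  let adjBar := adj.localization N.trW.Q N.trW N'.trW.Q N'.trW Fbar Gbar
  refine ⟨Fbar, Gbar, hF, hG, ⟨adjBar⟩, fun _ _ => ?_⟩
  have := adj.isIso_localization_counit N.trW.Q N.trW N'.trW.Q N'.trW Fbar Gbar
  exact ⟨adjBar.fullyFaithfulROfIsIsoCounit.full, adjBar.fullyFaithfulROfIsIsoCounit.faithful⟩

/-- **Lemma 2.2** (Orlov): Let `F : T ⥤ T'` be a triangle functor with a right adjoint `G`,
and let `N ⊆ T`, `N' ⊆ T'` be triangulated subcategories with `F(N) ⊆ N'` and `G(N') ⊆ N`.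
Then the functor `F̄ : T/N ⥤ T'/N'` induced by `F` on the Verdier quotients (the unique
functor satisfying `F̄ ∘ q = q' ∘ F`) admits a right adjoint `Ḡ`, namely the functor induced
by `G`; moreover, if `G` is fully faithful, then so is `Ḡ`. -/
theorem induced_functor_on_quotients_has_right_adjoint
    (F : T ⥤ T') [F.CommShift ℤ] [F.IsTriangulated] (G : T' ⥤ T) (adj : F ⊣ G)
    (N : ObjectProperty T) [N.IsTriangulated] (N' : ObjectProperty T') [N'.IsTriangulated]
    (hFN : ∀ X : T, N X → N' (F.obj X)) (hGN' : ∀ Y : T', N' Y → N (G.obj Y)) :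
    ∃ (Fbar : N.trW.Localization ⥤ N'.trW.Localization)
      (Gbar : N'.trW.Localization ⥤ N.trW.Localization),
      (N.trW.Q ⋙ Fbar = F ⋙ N'.trW.Q) ∧ (N'.trW.Q ⋙ Gbar = G ⋙ N.trW.Q) ∧
      Nonempty (Fbar ⊣ Gbar) ∧ (G.Full → G.Faithful → Gbar.Full ∧ Gbar.Faithful) :=
  induced_functor_on_quotients_has_right_adjoint_general F G adj N N' hFN hGN'

end Paper
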